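/- arXiv:2102.09661 — 4 statements merged into one kernel-verified Lean document; each statement's English description precedes it below -/
import Mathlib

section
/- Let M be a real p×q matrix with linearly independent columns and let X be a real q×p matrix. Then the p×p matrix M·X is symmetric if and only if there exists a symmetric q×q matrix S such that Xᵀ = M·S. -/
/-- A real p×q matrix M with linearly independent columns, X a q×p matrix:
M·X is symmetric iff Xᵀ = M·S for some symmetric S. -/
theorem sym_switch (p q : ℕ) (M : Matrix (Fin p) (Fin q) ℝ)
    (hM : LinearIndependent ℝ M.transpose) (X : Matrix (Fin q) (Fin p) ℝ) :
    (M * X).IsSymm ↔ ∃ S : Matrix (Fin q) (Fin q) ℝ, S.IsSymm ∧ X.transpose = M * S := by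
  -- Mᵀ * M is invertible
  have hMinj : Function.Injective M.mulVec := Matrix.mulVec_injective_iff.mpr hM
  have hA : IsUnit (M.transpose * M) := by
    rw [← Matrix.mulVec_injective_iff_isUnit]
    intro v w hvw
    apply hMinj
    have h0 : (M.transpose * M).mulVec (v - w) = 0 := by
      rw [Matrix.mulVec_sub, hvw, sub_self]
    have hct : M.conjTranspose = M.transpose := Matrix.conjTranspose_eq_transpose_of_trivial M
    rw [← hct, Matrix.conjTranspose_mul_self_mulVec_eq_zero] at h0
    have := sub_eq_zero.mp (hMinj (by rw [h0, Matrix.mulVec_zero]))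
    rw [this]
  have hAinv : (M.transpose * M) * (M.transpose * M)⁻¹ = 1 :=
    Matrix.mul_nonsing_inv _ (Matrix.isUnit_iff_isUnit_det _ |>.mp hA)
  have hAinv' : (M.transpose * M)⁻¹ * (M.transpose * M) = 1 :=
    Matrix.nonsing_inv_mul _ (Matrix.isUnit_iff_isUnit_det _ |>.mp hA)
  have hAsymm : (M.transpose * M).transpose = M.transpose * M := by
    rw [Matrix.transpose_mul, Matrix.transpose_transpose]
  constructor
  · intro h
    have h' : X.transpose * M.transpose = M * X := by
      have := h
      rwa [Matrix.IsSymm, Matrix.transpose_mul] at this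
    set S := X * M * (M.transpose * M)⁻¹ with hSdef
    have hXT : X.transpose = M * S := by
      calc X.transpose
          = X.transpose * ((M.transpose * M) * (M.transpose * M)⁻¹) := by
            rw [hAinv, Matrix.mul_one]
        _ = (X.transpose * M.transpose) * M * (M.transpose * M)⁻¹ := by
            simp only [Matrix.mul_assoc]
        _ = M * X * M * (M.transpose * M)⁻¹ := by rw [h']
        _ = M * S := by simp only [hSdef, Matrix.mul_assoc]
    refine ⟨S, ?_, hXT⟩
    unfold Matrix.IsSymm
    calc S.transpose
        = ((M.transpose * M)⁻¹).transpose * (M.transpose * X.transpose) := by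
          simp only [hSdef, Matrix.transpose_mul, Matrix.mul_assoc]
      _ = (M.transpose * M)⁻¹ * (M.transpose * (M * S)) := by
          rw [Matrix.transpose_nonsing_inv, hAsymm, hXT]
      _ = (M.transpose * M)⁻¹ * (M.transpose * M) * S := by
          simp only [Matrix.mul_assoc]
      _ = S := by rw [hAinv', Matrix.one_mul]
  · rintro ⟨S, hS, hX⟩
    have hX' : X = S.transpose * M.transpose := by
      have := congrArg Matrix.transpose hX
      simpa [Matrix.transpose_mul] using this
    unfold Matrix.IsSymm
    rw [Matrix.transpose_mul, hX, hX', hS.eq]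
    simp only [Matrix.mul_assoc]
end

section
/- Let N_i = D_i + Σ_{k∈I_i} (x_k ⊗ e_k + e_k ⊗ y_k) and N_j = D_j + Σ_{ℓ∈I_j} (z_ℓ ⊗ e_ℓ + e_ℓ ⊗ w_ℓ) be n×n matrices, where D_i, D_j have support contained in the diagonal band D(b) = {(p,q): |p−q| ≤ b}, the index sets I_i = I_{i}(b) and I_j = I_{j}(b) are disjoint integer intervals of half-width b around i and j, and x_k, y_k, z_ℓ, w_ℓ ∈ ℝⁿ. Then the support of N_i N_jᵀ − N_j N_iᵀ is contained in D(2b) ∪ (I_i(2b) × [1,n]) ∪ ([1,n] × I_i(2b)) ∪ (I_j(2b) × [1,n]) ∪ ([1,n] × I_j(2b)). -/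
lemma key_zero (n b : ℕ) (i j : Fin n)
    (Di Dj : Matrix (Fin n) (Fin n) ℝ)
    (hDi : ∀ p q : Fin n, Di p q ≠ 0 → Nat.dist p.val q.val ≤ b)
    (hDj : ∀ p q : Fin n, Dj p q ≠ 0 → Nat.dist p.val q.val ≤ b)
    (Ii Ij : Finset (Fin n))
    (hIi : Ii = Finset.univ.filter (fun x : Fin n => Nat.dist x.val i.val ≤ b))
    (hIj : Ij = Finset.univ.filter (fun x : Fin n => Nat.dist x.val j.val ≤ b))
    (hdisj : Disjoint Ii Ij)
    (x y z w : Fin n → Fin n → ℝ)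
    (Ni Nj : Matrix (Fin n) (Fin n) ℝ)
    (hNi : Ni = Di + ∑ k ∈ Ii, (Matrix.vecMulVec (x k) (Pi.single k 1) +
      Matrix.vecMulVec (Pi.single k 1) (y k)))
    (hNj : Nj = Dj + ∑ ℓ ∈ Ij, (Matrix.vecMulVec (z ℓ) (Pi.single ℓ 1) +
      Matrix.vecMulVec (Pi.single ℓ 1) (w ℓ)))
    (p q : Fin n)
    (hpq : ¬ Nat.dist p.val q.val ≤ 2 * b)
    (hpi : ¬ Nat.dist p.val i.val ≤ 2 * b)
    (hqi : ¬ Nat.dist q.val i.val ≤ 2 * b)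
    (hpj : ¬ Nat.dist p.val j.val ≤ 2 * b)
    (hqj : ¬ Nat.dist q.val j.val ≤ 2 * b) :
    (Ni * Nj.transpose) p q = 0 := by
  have hpIi : p ∉ Ii := by
    rw [hIi]; simp only [Finset.mem_filter, Finset.mem_univ, true_and]
    intro h; exact hpi (h.trans (by omega))
  have hqIj : q ∉ Ij := by
    rw [hIj]; simp only [Finset.mem_filter, Finset.mem_univ, true_and]
    intro h; exact hqj (h.trans (by omega))
  have hNipr : ∀ r : Fin n, Ni p r = Di p r + (if r ∈ Ii then x r p else 0) := by
    intro r
    rw [hNi]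
    simp only [Matrix.add_apply, Matrix.sum_apply, Matrix.vecMulVec_apply]
    congr 1
    have hterm : ∀ k ∈ Ii, (x k p * (Pi.single k 1 : Fin n → ℝ) r + (Pi.single k 1 : Fin n → ℝ) p * y k r)
        = if r = k then x k p else 0 := by
      intro k hk
      have hpk : p ≠ k := fun h => hpIi (h ▸ hk)
      simp [Pi.single_apply, hpk, mul_ite]
    rw [Finset.sum_congr rfl hterm, Finset.sum_ite_eq]
  have hNjqr : ∀ r : Fin n, Nj q r = Dj q r + (if r ∈ Ij then z r q else 0) := by
    intro r
    rw [hNj]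
    simp only [Matrix.add_apply, Matrix.sum_apply, Matrix.vecMulVec_apply]
    congr 1
    have hterm : ∀ k ∈ Ij, (z k q * (Pi.single k 1 : Fin n → ℝ) r + (Pi.single k 1 : Fin n → ℝ) q * w k r)
        = if r = k then z k q else 0 := by
      intro k hk
      have hqk : q ≠ k := fun h => hqIj (h ▸ hk)
      simp [Pi.single_apply, hqk, mul_ite]
    rw [Finset.sum_congr rfl hterm, Finset.sum_ite_eq]
  rw [Matrix.mul_apply]
  apply Finset.sum_eq_zero
  intro r _
  rw [Matrix.transpose_apply, hNipr, hNjqr]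
  have hri : r ∈ Ii → Nat.dist r.val i.val ≤ b := by
    rw [hIi]; intro h; simpa using h
  have hrj : r ∈ Ij → Nat.dist r.val j.val ≤ b := by
    rw [hIj]; intro h; simpa using h
  by_cases h1 : r ∈ Ii
  · -- r ∈ Ii, so r ∉ Ij, and Dj q r = 0 (else dist q i ≤ 2b)
    have h2 : r ∉ Ij := Finset.disjoint_left.mp hdisj h1
    have hDjz : Dj q r = 0 := by
      by_contra hc
      have hb := hDj q r hc
      exact hqi (le_trans (Nat.dist.triangle_inequality q.val r.val i.val)
        (by have := hri h1; omega))
    simp [h2, hDjz]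
  · by_cases h2 : r ∈ Ij
    · have hDiz : Di p r = 0 := by
        by_contra hc
        have hb := hDi p r hc
        exact hpj (le_trans (Nat.dist.triangle_inequality p.val r.val j.val)
          (by have := hrj h2; omega))
      simp [h1, hDiz]
    · have : Di p r = 0 ∨ Dj q r = 0 := by
        by_contra hc
        push_neg at hc
        have hb1 := hDi p r hc.1
        have hb2 := hDj q r hc.2
        exact hpq (le_trans (Nat.dist.triangle_inequality p.val r.val q.val)
          (by rw [Nat.dist_comm r.val q.val] at *; omega))
      rcases this with h | h <;> simp [h1, h2, h]

/-- Support of N_i N_jᵀ − N_j N_iᵀ for matrices that are a band plus a cross pattern,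
with disjoint cross intervals. -/
theorem support_quadratic_terms (n b : ℕ) (i j : Fin n)
    (Di Dj : Matrix (Fin n) (Fin n) ℝ)
    (hDi : ∀ p q : Fin n, Di p q ≠ 0 → Nat.dist p.val q.val ≤ b)
    (hDj : ∀ p q : Fin n, Dj p q ≠ 0 → Nat.dist p.val q.val ≤ b)
    (Ii Ij : Finset (Fin n))
    (hIi : Ii = Finset.univ.filter (fun x : Fin n => Nat.dist x.val i.val ≤ b))
    (hIj : Ij = Finset.univ.filter (fun x : Fin n => Nat.dist x.val j.val ≤ b))
    (hdisj : Disjoint Ii Ij)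
    (x y z w : Fin n → Fin n → ℝ)
    (Ni Nj : Matrix (Fin n) (Fin n) ℝ)
    (hNi : Ni = Di + ∑ k ∈ Ii, (Matrix.vecMulVec (x k) (Pi.single k 1) +
      Matrix.vecMulVec (Pi.single k 1) (y k)))
    (hNj : Nj = Dj + ∑ ℓ ∈ Ij, (Matrix.vecMulVec (z ℓ) (Pi.single ℓ 1) +
      Matrix.vecMulVec (Pi.single ℓ 1) (w ℓ))) :
    ∀ p q : Fin n, (Ni * Nj.transpose - Nj * Ni.transpose) p q ≠ 0 →
      Nat.dist p.val q.val ≤ 2 * b ∨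
      Nat.dist p.val i.val ≤ 2 * b ∨ Nat.dist q.val i.val ≤ 2 * b ∨
      Nat.dist p.val j.val ≤ 2 * b ∨ Nat.dist q.val j.val ≤ 2 * b := by
  intro p q h
  by_contra hcon
  push_neg at hcon
  obtain ⟨h1, h2, h3, h4, h5⟩ := hcon
  apply h
  rw [Matrix.sub_apply]
  rw [key_zero n b i j Di Dj hDi hDj Ii Ij hIi hIj hdisj x y z w Ni Nj hNi hNj p q
    (by omega) (by omega) (by omega) (by omega) (by omega),
    key_zero n b j i Dj Di hDj hDi Ij Ii hIj hIi hdisj.symm z w x y Nj Ni hNj hNi p q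
    (by omega) (by omega) (by omega) (by omega) (by omega)]
  ring
end

section
/- Let A₁, A₂, A₃ ∈ ℝ^{m×n} be matrices each of whose collections of at most m columns are linearly independent, with the additional property that the columns of A₁ indexed by I₂ are zero. Let I₁, I₂, I₃ be pairwise disjoint subsets of {1,…,n} and let Y₁, Y₂, Y₃ ∈ ℝ^{n×p} be matrices such that Y_i has nonzero entries only in rows indexed by I_i and each column of Y_i has at most m nonzero entries. If A₂Y₁ = −(A₁Y₂)ᵀ, A₃Y₁ = −(A₁Y₃)ᵀ, and A₃Y₂ = −(A₂Y₃)ᵀ, then Y₁ = Y₂ = Y₃ = 0. -/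
/-- If every collection of at most `m` columns of `A` is linearly independent and
`y` has at most `m` nonzero entries with `A.mulVec y = 0`, then `y = 0`. -/
lemma sparse_kernel_zero (m n : ℕ) (A : Matrix (Fin m) (Fin n) ℝ)
    (hA : ∀ s : Finset (Fin n), s.card ≤ m →
      LinearIndependent ℝ (fun j : s => fun i : Fin m => A i j))
    (y : Fin n → ℝ)
    (hcard : (Finset.univ.filter (fun r : Fin n => y r ≠ 0)).card ≤ m)
    (h : A.mulVec y = 0) : y = 0 := by
  set s := Finset.univ.filter (fun r : Fin n => y r ≠ 0) with hs
  have hli := hA s hcard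
  rw [Fintype.linearIndependent_iff] at hli
  have hsum : ∑ j : s, y j • (fun i : Fin m => A i j) = 0 := by
    funext i
    have : ∑ j : s, y (j : Fin n) * A i j = ∑ j ∈ s, y j * A i j :=
      Finset.sum_attach s (fun j => y j * A i j)
    have h2 : ∑ j ∈ s, y j * A i j = ∑ j : Fin n, A i j * y j := by
      rw [Finset.sum_filter]
      refine Finset.sum_congr rfl (fun j _ => ?_)
      by_cases hy : y j = 0 <;> simp [hy, mul_comm]
    have h3 : ∑ j : Fin n, A i j * y j = 0 := by
      have := congrFun h i
      simpa [Matrix.mulVec, dotProduct] using this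
    simp only [Finset.sum_apply, Pi.smul_apply, smul_eq_mul, Pi.zero_apply]
    rw [this, h2, h3]
  have key := hli (fun j => y j) hsum
  funext r
  by_cases hy : y r = 0
  · exact hy
  · exact key ⟨r, by simp [hs, hy]⟩

/-- Matrix version. -/
lemma sparse_kernel_zero_mat (m n : ℕ) (A : Matrix (Fin m) (Fin n) ℝ)
    (hA : ∀ s : Finset (Fin n), s.card ≤ m →
      LinearIndependent ℝ (fun j : s => fun i : Fin m => A i j))
    (Y : Matrix (Fin n) (Fin m) ℝ)
    (hcol : ∀ c : Fin m, (Finset.univ.filter (fun r : Fin n => Y r c ≠ 0)).card ≤ m)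
    (h : A * Y = 0) : Y = 0 := by
  ext r c
  have hc : A.mulVec (fun r => Y r c) = 0 := by
    funext i
    have := congrFun (congrFun h i) c
    simpa [Matrix.mul_apply, Matrix.mulVec, dotProduct] using this
  have := sparse_kernel_zero m n A hA (fun r => Y r c) (hcol c) hc
  exact congrFun this r

/-- Deterministic core of Lemma 4: the coupled system forces Y₁ = Y₂ = Y₃ = 0. -/
theorem coupled_system_trivial (m n : ℕ)
    (A₁ A₂ A₃ : Matrix (Fin m) (Fin n) ℝ)
    (hA₁ : ∀ s : Finset (Fin n), s.card ≤ m →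
      LinearIndependent ℝ (fun j : s => fun i : Fin m => A₁ i j))
    (hA₂ : ∀ s : Finset (Fin n), s.card ≤ m →
      LinearIndependent ℝ (fun j : s => fun i : Fin m => A₂ i j))
    (hA₃ : ∀ s : Finset (Fin n), s.card ≤ m →
      LinearIndependent ℝ (fun j : s => fun i : Fin m => A₃ i j))
    (I₁ I₂ I₃ : Finset (Fin n))
    (h12 : Disjoint I₁ I₂) (h13 : Disjoint I₁ I₃) (h23 : Disjoint I₂ I₃)
    (hA₁zero : ∀ (i : Fin m) (k : Fin n), k ∈ I₂ → A₁ i k = 0)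
    (Y₁ Y₂ Y₃ : Matrix (Fin n) (Fin m) ℝ)
    (hY₁row : ∀ (r : Fin n) (c : Fin m), Y₁ r c ≠ 0 → r ∈ I₁)
    (hY₂row : ∀ (r : Fin n) (c : Fin m), Y₂ r c ≠ 0 → r ∈ I₂)
    (hY₃row : ∀ (r : Fin n) (c : Fin m), Y₃ r c ≠ 0 → r ∈ I₃)
    (hY₁col : ∀ c : Fin m, (Finset.univ.filter (fun r : Fin n => Y₁ r c ≠ 0)).card ≤ m)
    (hY₂col : ∀ c : Fin m, (Finset.univ.filter (fun r : Fin n => Y₂ r c ≠ 0)).card ≤ m)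
    (hY₃col : ∀ c : Fin m, (Finset.univ.filter (fun r : Fin n => Y₃ r c ≠ 0)).card ≤ m)
    (h1 : A₂ * Y₁ = -(A₁ * Y₂).transpose)
    (h2 : A₃ * Y₁ = -(A₁ * Y₃).transpose)
    (h3 : A₃ * Y₂ = -(A₂ * Y₃).transpose) :
    Y₁ = 0 ∧ Y₂ = 0 ∧ Y₃ = 0 := by
  -- A₁ * Y₂ = 0 since A₁ vanishes on columns in I₂ and Y₂ is supported on rows in I₂
  have hA1Y2 : A₁ * Y₂ = 0 := by
    ext i c
    simp only [Matrix.mul_apply, Matrix.zero_apply]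
    refine Finset.sum_eq_zero (fun k _ => ?_)
    by_cases hy : Y₂ k c = 0
    · simp [hy]
    · rw [hA₁zero i k (hY₂row k c hy), zero_mul]
  -- hence A₂ * Y₁ = 0 and Y₁ = 0
  have hY1 : Y₁ = 0 := by
    apply sparse_kernel_zero_mat m n A₂ hA₂ Y₁ hY₁col
    rw [h1, hA1Y2]
    simp
  -- then A₁ * Y₃ = 0 from h2, so Y₃ = 0
  have hY3 : Y₃ = 0 := by
    apply sparse_kernel_zero_mat m n A₁ hA₁ Y₃ hY₃col
    have : -(A₁ * Y₃).transpose = 0 := by rw [← h2, hY1, Matrix.mul_zero]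
    have h0 : (A₁ * Y₃).transpose = 0 := by
      rw [← neg_neg (A₁ * Y₃).transpose, this, neg_zero]
    calc A₁ * Y₃ = (A₁ * Y₃).transpose.transpose := by rw [Matrix.transpose_transpose]
      _ = 0 := by rw [h0]; simp
  -- finally A₃ * Y₂ = 0 from h3, so Y₂ = 0
  have hY2 : Y₂ = 0 := by
    apply sparse_kernel_zero_mat m n A₃ hA₃ Y₂ hY₂col
    rw [h3, hY3, Matrix.mul_zero]
    simp
  exact ⟨hY1, hY2, hY3⟩
end

section
/- Let J, K be disjoint subsets of {1,…,n} and I ⊆ {1,…,n} with |I| ≥ |J| + |K| and r ≥ |J| + |K|. Then there exist matrices A, B ∈ ℝ^{n×r} and diagonal matrices D_i, D_j ∈ ℝ^{r×r} such that, writing M_i = B D_i Aᵀ and M_j = B D_j Aᵀ, the |I| × (|J|+|K|) matrix [M_j(I,J), −M_i(I,K)] has full column rank. -/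
/-- Witness part of Lemma 8, statement 1: existence of A, B and diagonal D_i, D_j
making [M_j(I,J), −M_i(I,K)] of full column rank. -/
theorem full_rank_witness_one (n r : ℕ)
    (I J K : Finset (Fin n)) (hJK : Disjoint J K)
    (hI : J.card + K.card ≤ I.card) (hr : J.card + K.card ≤ r) :
    ∃ (A B : Matrix (Fin n) (Fin r) ℝ) (Di Dj : Matrix (Fin r) (Fin r) ℝ),
      Di.IsDiag ∧ Dj.IsDiag ∧
      LinearIndependent ℝ
        (fun col : J ⊕ K => fun row : I =>
          (match col with
          | Sum.inl s => (B * Dj * A.transpose) row s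
          | Sum.inr s => -(B * Di * A.transpose) row s : ℝ)) := by
  classical
  obtain ⟨e⟩ : Nonempty ((J ⊕ K) ↪ I) := by
    rw [Function.Embedding.nonempty_iff_card_le]
    simpa [Fintype.card_sum, Fintype.card_coe] using hI
  obtain ⟨ψ⟩ : Nonempty ((J ⊕ K) ↪ Fin r) := by
    rw [Function.Embedding.nonempty_iff_card_le]
    simpa [Fintype.card_sum, Fintype.card_coe] using hr
  set A : Matrix (Fin n) (Fin r) ℝ := fun s t =>
    if (∃ j : J, (j : Fin n) = s ∧ ψ (Sum.inl j) = t) ∨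
       (∃ k : K, (k : Fin n) = s ∧ ψ (Sum.inr k) = t) then 1 else 0 with hA
  set B : Matrix (Fin n) (Fin r) ℝ := fun i t =>
    if ∃ c : J ⊕ K, ((e c : Fin n) = i ∧ ψ c = t) then 1 else 0 with hB
  set di : Fin r → ℝ := fun t => if ∃ k : K, ψ (Sum.inr k) = t then -1 else 0 with hdi
  set dj : Fin r → ℝ := fun t => if ∃ j : J, ψ (Sum.inl j) = t then 1 else 0 with hdj
  refine ⟨A, B, Matrix.diagonal di, Matrix.diagonal dj,
    Matrix.isDiag_diagonal di, Matrix.isDiag_diagonal dj, ?_⟩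
  have hsum : ∀ (d : Fin r → ℝ) (ρ : I) (s : Fin n),
      (B * Matrix.diagonal d * A.transpose) (ρ : Fin n) s
        = ∑ t, B (ρ : Fin n) t * d t * A s t := by
    intro d ρ s
    rw [Matrix.mul_assoc]
    simp only [Matrix.mul_apply, Matrix.diagonal_mul, Matrix.transpose_apply,
      Matrix.diagonal_apply, ite_mul, zero_mul, Finset.sum_ite_eq,
      Finset.mem_univ, if_true]
    exact Finset.sum_congr rfl fun t _ => (mul_assoc _ _ _).symm
  have hBval : ∀ (c : J ⊕ K) (ρ : I),
      B (ρ : Fin n) (ψ c) = if e c = ρ then 1 else 0 := by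
    intro c ρ
    by_cases h : e c = ρ
    · rw [if_pos h]
      simp only [hB]
      exact if_pos ⟨c, congrArg Subtype.val h, rfl⟩
    · rw [if_neg h]
      simp only [hB]
      refine if_neg ?_
      rintro ⟨c', hc1, hc2⟩
      have : c' = c := ψ.injective hc2
      subst this
      exact h (Subtype.ext hc1)
  have key : ∀ (c : J ⊕ K) (ρ : I),
      (match c with
        | Sum.inl s => (B * Matrix.diagonal dj * A.transpose) (ρ : Fin n) s
        | Sum.inr s => -(B * Matrix.diagonal di * A.transpose) (ρ : Fin n) s : ℝ)
      = if e c = ρ then 1 else 0 := by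
    intro c ρ
    cases c with
    | inl s =>
      have hAval : ∀ t, A (s : Fin n) t = if ψ (Sum.inl s) = t then 1 else 0 := by
        intro t
        by_cases h : ψ (Sum.inl s) = t
        · rw [if_pos h]; simp only [hA]; exact if_pos (Or.inl ⟨s, rfl, h⟩)
        · rw [if_neg h]; simp only [hA]
          refine if_neg ?_
          rintro (⟨j, hj, ht⟩ | ⟨k, hk, ht⟩)
          · have : j = s := Subtype.ext hj
            subst this; exact h ht
          · exact Finset.disjoint_left.mp hJK s.2 (hk ▸ k.2)
      show (B * Matrix.diagonal dj * A.transpose) (ρ : Fin n) s = _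
      rw [hsum, Finset.sum_eq_single (ψ (Sum.inl s))]
      · have hdjv : dj (ψ (Sum.inl s)) = 1 := by
          simp only [hdj]; exact if_pos ⟨s, rfl⟩
        rw [hdjv, hAval, if_pos rfl, hBval, mul_one, mul_one]
      · intro t _ ht
        rw [hAval, if_neg (fun h => ht h.symm)]; ring
      · intro h; exact absurd (Finset.mem_univ _) h
    | inr s =>
      have hAval : ∀ t, A (s : Fin n) t = if ψ (Sum.inr s) = t then 1 else 0 := by
        intro t
        by_cases h : ψ (Sum.inr s) = t
        · rw [if_pos h]; simp only [hA]; exact if_pos (Or.inr ⟨s, rfl, h⟩)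
        · rw [if_neg h]; simp only [hA]
          refine if_neg ?_
          rintro (⟨j, hj, ht⟩ | ⟨k, hk, ht⟩)
          · exact Finset.disjoint_right.mp hJK s.2 (show (s:Fin n) ∈ J from hj ▸ j.2)
          · have : k = s := Subtype.ext hk
            subst this; exact h ht
      show -(B * Matrix.diagonal di * A.transpose) (ρ : Fin n) s = _
      rw [hsum, Finset.sum_eq_single (ψ (Sum.inr s))]
      · have hdiv : di (ψ (Sum.inr s)) = -1 := by
          simp only [hdi]; exact if_pos ⟨s, rfl⟩
        rw [hdiv, hAval, if_pos rfl, hBval]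
        split <;> ring
      · intro t _ ht
        rw [hAval, if_neg (fun h => ht h.symm)]; ring
      · intro h; exact absurd (Finset.mem_univ _) h
  have hfun : (fun col : J ⊕ K => fun row : I =>
      (match col with
      | Sum.inl s => (B * Matrix.diagonal dj * A.transpose) row s
      | Sum.inr s => -(B * Matrix.diagonal di * A.transpose) row s : ℝ))
      = (⇑(Pi.basisFun ℝ I) ∘ ⇑e) := by
    funext c ρ
    rw [key c ρ]
    simp [Pi.basisFun_apply, Pi.single_apply, eq_comm]
  rw [hfun]
  exact (Pi.basisFun ℝ I).linearIndependent.comp e e.injective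
end
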